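/- arXiv:0805.4035 — 3 statements merged into one kernel-verified Lean document; each statement's English description precedes it below -/
import Mathlib

section
/- Let k be an algebraically closed field and V a finite-dimensional k-vector space. Given two flags Fℓ and Fℓ' in V (i.e., two families of linear subspaces of V, each totally ordered by inclusion), there exists a decomposition V = L₁ ⊕ ⋯ ⊕ L_r with each Lᵢ a one-dimensional subspace, such that every subspace belonging to Fℓ or to Fℓ' is the (internal) direct sum of some of the Lᵢ. Equivalently, there is a basis e₁, …, e_r of V such that every subspace occurring in either flag is spanned by a subset of {e₁, …, e_r}. -/
/-!
Induct on `dim V`. Choose a hyperplane `H` containing every proper member of `F`, and a vector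
`v ∉ H` in the smallest member of `F'` not contained in `H`. Then every member `W` of either
chain lies in `H` or contains `v`, and in the latter case `W = (W ⊓ H) ⊔ k ∙ v` by modularity.
So a basis of `H` adapted to the traces of both chains on `H`, extended by `v`, is adapted to
both chains.
-/

open Module Submodule

section Chain

variable {α : Type*} [PartialOrder α] {s : Set α}

theorem IsChain.exists_isLeast [WellFoundedLT α] (hs : IsChain (· ≤ ·) s) (hne : s.Nonempty) :
    ∃ m, IsLeast s m := by
  obtain ⟨m, hm⟩ := exists_minimal_of_wellFoundedLT (· ∈ s) hne
  refine ⟨m, hm.prop, fun a ha => ?_⟩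
  exact (hs.total hm.prop ha).elim id (hm.le_of_le ha)

theorem IsChain.exists_isGreatest [WellFoundedGT α] (hs : IsChain (· ≤ ·) s) (hne : s.Nonempty) :
    ∃ m, IsGreatest s m := by
  obtain ⟨m, hm⟩ := exists_maximal_of_wellFoundedGT (· ∈ s) hne
  refine ⟨m, hm.prop, fun a ha => ?_⟩
  exact (hs.total ha hm.prop).elim id (hm.le_of_ge ha)

variable [BoundedOrder α]

theorem IsChain.exists_isCoatom_forall_le [Nontrivial α] [WellFoundedGT α]
    (hs : IsChain (· ≤ ·) s) : ∃ c, IsCoatom c ∧ ∀ a ∈ s, a ≠ ⊤ → a ≤ c := by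
  obtain ⟨m, hm_mem, hm⟩ := ((hs.mono (Set.sep_subset s (· ≠ ⊤))).insert
    fun _ _ _ => Or.inl bot_le).exists_isGreatest (Set.insert_nonempty ⊥ _)
  have hm_ne : m ≠ ⊤ := by
    rcases hm_mem with rfl | ⟨-, h⟩
    exacts [bot_ne_top, h]
  obtain ⟨c, hc, hmc⟩ := (eq_top_or_exists_le_coatom m).resolve_left hm_ne
  exact ⟨c, hc, fun a ha hat => (hm (Set.mem_insert_of_mem _ ⟨ha, hat⟩)).trans hmc⟩

theorem IsChain.exists_least_not_le [WellFoundedLT α] (hs : IsChain (· ≤ ·) s) {c : α}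
    (hc : c ≠ ⊤) : ∃ m, ¬m ≤ c ∧ ∀ a ∈ s, ¬a ≤ c → m ≤ a := by
  obtain ⟨m, hm_mem, hm⟩ := ((hs.mono (Set.sep_subset s (¬· ≤ c))).insert
    fun _ _ _ => Or.inr le_top).exists_isLeast (Set.insert_nonempty ⊤ _)
  refine ⟨m, ?_, fun a ha hac => hm (Set.mem_insert_of_mem _ ⟨ha, hac⟩)⟩
  rcases hm_mem with rfl | ⟨-, h⟩
  exacts [fun h => hc (top_le_iff.mp h), h]

end Chain

namespace Submodule

variable {R V : Type*} [AddCommGroup V] {v : V}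

theorem eq_zero_of_smul_add_eq_zero [DivisionRing R] [Module R V] {H : Submodule R V}
    (hv : v ∉ H) {c : R} {x : V} (hx : x ∈ H) (h : c • v + x = 0) : c = 0 := by
  by_contra hc
  have : c • v ∈ H := by rw [eq_neg_of_add_eq_zero_left h]; exact H.neg_mem hx
  exact hv ((H.smul_mem_iff hc).mp this)

variable [Ring R] [Module R V] {H W : Submodule R V}

theorem exists_add_smul_mem_of_sup_eq_top (h : H ⊔ R ∙ v = ⊤) (z : V) :
    ∃ c : R, z + c • v ∈ H := by
  have hz : z ∈ span R (insert v (H : Set V)) := by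
    rw [span_insert, span_eq, sup_comm, h]
    trivial
  simpa only [span_eq] using mem_span_insert'.mp hz

theorem exists_eq_span_image_cons {n : ℕ} (hHv : H ⊔ R ∙ v = ⊤) (b : Fin n → H)
    {S : Set (Fin n)} (hS : W.comap H.subtype = span R (b '' S)) (hW : v ∈ W ∨ W ≤ H) :
    ∃ T : Set (Fin (n + 1)), W = span R (Fin.cons v (H.subtype ∘ b) '' T) := by
  have hWH : W ⊓ H = span R ((H.subtype ∘ b) '' S) := by
    rw [inf_comm, ← map_comap_subtype, hS, map_span, Set.image_comp]
  have hsucc : Fin.cons v (H.subtype ∘ b) '' (Fin.succ '' S) = (H.subtype ∘ b) '' S := by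
    rw [Set.image_image]
    simp only [Fin.cons_succ]
  rcases hW with hvW | hWH'
  · refine ⟨insert 0 (Fin.succ '' S), ?_⟩
    rw [Set.image_insert_eq, hsucc, span_insert, Fin.cons_zero, ← hWH, sup_comm,
      inf_sup_assoc_of_le _ ((span_singleton_le_iff_mem _ _).mpr hvW), hHv, inf_top_eq]
  · exact ⟨Fin.succ '' S, by rw [hsucc, ← hWH, inf_eq_left.mpr hWH']⟩

end Submodule

theorem exists_basis_forall_mem_eq_span_image {k V : Type*} [DivisionRing k]
    [AddCommGroup V] [Module k V] [FiniteDimensional k V] {n : ℕ} (hn : finrank k V = n) {F F' : Set (Submodule k V)}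
    (hF : IsChain (· ≤ ·) F) (hF' : IsChain (· ≤ ·) F') :
    ∃ b : Basis (Fin n) k V, ∀ W ∈ F ∪ F', ∃ S : Set (Fin n), W = span k (b '' S) := by
  induction n generalizing V with
  | zero =>
    have : Subsingleton V := finrank_zero_iff.mp hn
    exact ⟨Basis.empty V, fun W _ => ⟨∅, Subsingleton.elim _ _⟩⟩
  | succ n ih =>
    have : Nontrivial V := finrank_pos_iff (R := k) |>.mp (by omega)
    obtain ⟨H, hH, hFH⟩ := hF.exists_isCoatom_forall_le
    obtain ⟨W₀, hW₀H, hW₀⟩ := hF'.exists_least_not_le hH.1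
    obtain ⟨v, hvW₀, hvH⟩ := SetLike.not_le_iff_exists.mp hW₀H
    have hHv : H ⊔ k ∙ v = ⊤ :=
      hH.lt_iff.mp (left_lt_sup.mpr (by rwa [span_singleton_le_iff_mem]))
    have hv : v ≠ 0 := fun h => hvH (h ▸ H.zero_mem)
    have hrank : finrank k H = n := by
      have := finrank_add_eq_of_isCompl
        ⟨(disjoint_span_singleton' hv).mpr hvH, codisjoint_iff.mpr hHv⟩
      rw [finrank_span_singleton hv] at this
      omega
    obtain ⟨b, hb⟩ := ih hrank (F := F.image (comap H.subtype)) (F' := F'.image (comap H.subtype))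
      (hF.image_of_map_rel _ _ _ fun _ _ h => comap_mono h)
      (hF'.image_of_map_rel _ _ _ fun _ _ h => comap_mono h)
    refine ⟨Basis.mkFinCons v b (fun c x hx h => eq_zero_of_smul_add_eq_zero hvH hx h)
      (exists_add_smul_mem_of_sup_eq_top hHv), fun W hW => ?_⟩
    obtain ⟨S, hS⟩ := hb _ (hW.imp (Set.mem_image_of_mem _) (Set.mem_image_of_mem _))
    rw [Basis.coe_mkFinCons]
    refine exists_eq_span_image_cons hHv b hS (or_iff_not_imp_right.mpr fun hWH => ?_)
    rcases hW with hW | hW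
    · rw [of_not_not (mt (hFH W hW) hWH)]
      trivial
    · exact hW₀ W hW hWH hvW₀

theorem flags_simultaneous_basis_general (k : Type*) [Field k]
    (V : Type*) [AddCommGroup V] [Module k V] [FiniteDimensional k V]
    (F F' : Set (Submodule k V))
    (hF : IsChain (· ≤ ·) F) (hF' : IsChain (· ≤ ·) F') :
    ∃ b : Module.Basis (Fin (Module.finrank k V)) k V,
      ∀ W ∈ F ∪ F', ∃ S : Set (Fin (Module.finrank k V)),
        W = Submodule.span k (⇑b '' S) :=
  exists_basis_forall_mem_eq_span_image rfl hF hF'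

/-- A flag in a vector space is a family of subspaces totally ordered by inclusion.
Given two flags `F` and `F'` in a finite-dimensional vector space `V` over an
algebraically closed field `k`, there is a basis of `V` such that every subspace
belonging to either flag is spanned by a subset of the basis vectors. -/
theorem flags_simultaneous_basis (k : Type*) [Field k] [IsAlgClosed k]
    (V : Type*) [AddCommGroup V] [Module k V] [FiniteDimensional k V]
    (F F' : Set (Submodule k V))
    (hF : IsChain (· ≤ ·) F) (hF' : IsChain (· ≤ ·) F') :
    ∃ b : Module.Basis (Fin (Module.finrank k V)) k V,
      ∀ W ∈ F ∪ F', ∃ S : Set (Fin (Module.finrank k V)),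
        W = Submodule.span k (⇑b '' S) :=
  flags_simultaneous_basis_general k V F F' hF hF'
end

section
/- Let P₁ and P₂ be lattice polytopes in ℝⁿ, and let Q ⊆ ℝⁿ⁺¹ be the Cayley sum of P₁ and P₂, that is, the convex hull of (P₁ × {0}) ∪ (P₂ × {1}). If every lattice point of Q + Q is the sum of two lattice points of Q, then every lattice point of the Minkowski sum P₁ + P₂ is the sum of a lattice point of P₁ and a lattice point of P₂. -/
/-!
Lift `w = a + b ∈ P₁ + P₂` to `(w, 1) = (a, 0) + (b, 1) ∈ Q + Q`. The last coordinate of a point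
of `Q` lies in `[0, 1]`, so in a decomposition of `(w, 1)` into two lattice points of `Q` one
summand has last coordinate `0` and the other `1`. Since `P₁` and `P₂` are convex, the slices of
`Q` at heights `0` and `1` are exactly `P₁ × {0}` and `P₂ × {1}`, which gives the decomposition
of `w`.
-/

open Pointwise

/-- A point of `ℝᵐ` is a lattice point if all its coordinates are integers. -/
def IsLatticePoint {m : ℕ} (x : Fin m → ℝ) : Prop := ∀ i, ∃ z : ℤ, x i = (z : ℝ)

namespace Fin

variable {n : ℕ} {α : Type*}

lemma snoc_add_snoc [Add α] (a b : Fin n → α) (x y : α) :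
    (snoc a x + snoc b y : Fin (n + 1) → α) = snoc (a + b) (x + y) := by
  funext i
  refine lastCases ?_ (fun j ↦ ?_) i <;> simp

lemma smul_snoc {M : Type*} [SMul M α] (c : M) (a : Fin n → α) (x : α) :
    c • (snoc a x : Fin (n + 1) → α) = snoc (c • a) (c • x) := by
  funext i
  refine lastCases ?_ (fun j ↦ ?_) i <;> simp

end Fin

section CayleySum

variable (𝕜 : Type*) [Field 𝕜] [LinearOrder 𝕜] {n : ℕ}

def cayleySum (P₁ P₂ : Set (Fin n → 𝕜)) : Set (Fin (n + 1) → 𝕜) :=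
  convexHull 𝕜 ((fun x ↦ Fin.snoc x 0) '' P₁ ∪ (fun x ↦ Fin.snoc x 1) '' P₂)

variable {𝕜} {P₁ P₂ : Set (Fin n → 𝕜)} {q : Fin (n + 1) → 𝕜}

lemma Convex.image_snoc {P : Set (Fin n → 𝕜)} (hP : Convex 𝕜 P) (t : 𝕜) :
    Convex 𝕜 ((fun x ↦ Fin.snoc x t : (Fin n → 𝕜) → Fin (n + 1) → 𝕜) '' P) := by
  rintro _ ⟨a, ha, rfl⟩ _ ⟨b, hb, rfl⟩ u v hu hv huv
  refine ⟨u • a + v • b, hP ha hb hu hv huv, ?_⟩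
  simp only [Fin.smul_snoc, Fin.snoc_add_snoc, smul_eq_mul, ← add_mul, huv, one_mul]

lemma snoc_zero_mem_cayleySum {x : Fin n → 𝕜} (hx : x ∈ P₁) :
    Fin.snoc x 0 ∈ cayleySum 𝕜 P₁ P₂ :=
  subset_convexHull 𝕜 _ (Or.inl ⟨x, hx, rfl⟩)

lemma snoc_one_mem_cayleySum {x : Fin n → 𝕜} (hx : x ∈ P₂) :
    Fin.snoc x 1 ∈ cayleySum 𝕜 P₁ P₂ :=
  subset_convexHull 𝕜 _ (Or.inr ⟨x, hx, rfl⟩)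

variable [IsStrictOrderedRing 𝕜]

lemma last_mem_Icc_of_mem_cayleySum (hq : q ∈ cayleySum 𝕜 P₁ P₂) :
    q (Fin.last n) ∈ Set.Icc 0 1 := by
  refine convexHull_min ?_ ((convex_Icc 0 1).linear_preimage (LinearMap.proj (Fin.last n))) hq
  rintro _ (⟨x, -, rfl⟩ | ⟨x, -, rfl⟩) <;> simp

variable (hP₁ : Convex 𝕜 P₁) (hP₂ : Convex 𝕜 P₂) (hne₁ : P₁.Nonempty) (hne₂ : P₂.Nonempty)
include hP₁ hP₂ hne₁ hne₂

lemma exists_eq_snoc_of_mem_cayleySum (hq : q ∈ cayleySum 𝕜 P₁ P₂) :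
    ∃ p₁ ∈ P₁, ∃ p₂ ∈ P₂, ∃ t : 𝕜, q = Fin.snoc ((1 - t) • p₁ + t • p₂) t := by
  rw [cayleySum, convexHull_union (hne₁.image _) (hne₂.image _),
    (hP₁.image_snoc 0).convexHull_eq, (hP₂.image_snoc 1).convexHull_eq, mem_convexJoin] at hq
  obtain ⟨_, ⟨p₁, hp₁, rfl⟩, _, ⟨p₂, hp₂, rfl⟩, u, t, -, -, hut, rfl⟩ := hq
  obtain rfl : u = 1 - t := eq_sub_of_add_eq hut
  refine ⟨p₁, hp₁, p₂, hp₂, t, ?_⟩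
  simp [Fin.smul_snoc, Fin.snoc_add_snoc]

lemma init_mem_left_of_mem_cayleySum (hq : q ∈ cayleySum 𝕜 P₁ P₂)
    (hlast : q (Fin.last n) = 0) : Fin.init q ∈ P₁ := by
  obtain ⟨p₁, hp₁, p₂, -, t, rfl⟩ := exists_eq_snoc_of_mem_cayleySum hP₁ hP₂ hne₁ hne₂ hq
  obtain rfl : t = 0 := by simpa using hlast
  simpa using hp₁

lemma init_mem_right_of_mem_cayleySum (hq : q ∈ cayleySum 𝕜 P₁ P₂)
    (hlast : q (Fin.last n) = 1) : Fin.init q ∈ P₂ := by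
  obtain ⟨p₁, -, p₂, hp₂, t, rfl⟩ := exists_eq_snoc_of_mem_cayleySum hP₁ hP₂ hne₁ hne₂ hq
  obtain rfl : t = 1 := by simpa using hlast
  simpa using hp₂

end CayleySum

namespace IsLatticePoint

variable {n : ℕ}

lemma init {q : Fin (n + 1) → ℝ} (hq : IsLatticePoint q) : IsLatticePoint (Fin.init q) :=
  fun i ↦ hq i.castSucc

lemma snoc {x : Fin n → ℝ} (hx : IsLatticePoint x) (z : ℤ) :
    IsLatticePoint (Fin.snoc x (z : ℝ) : Fin (n + 1) → ℝ) := by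
  intro i
  refine Fin.lastCases ⟨z, by simp⟩ (fun j ↦ ?_) i
  simpa using hx j

end IsLatticePoint

lemma last_eq_zero_or_one_of_mem_cayleySum {n : ℕ} {P₁ P₂ : Set (Fin n → ℝ)}
    {q : Fin (n + 1) → ℝ} (hq : q ∈ cayleySum ℝ P₁ P₂) (hql : IsLatticePoint q) :
    q (Fin.last n) = 0 ∨ q (Fin.last n) = 1 := by
  obtain ⟨z, hz⟩ := hql (Fin.last n)
  obtain ⟨h0, h1⟩ := last_mem_Icc_of_mem_cayleySum hq
  rw [hz] at h0 h1 ⊢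
  norm_cast at h0 h1 ⊢
  omega

/-- Remark 4.5: let `Q` be the Cayley sum of lattice polytopes `P₁` and `P₂`, i.e. the
convex hull of `(P₁ × {0}) ∪ (P₂ × {1})`. If every lattice point of `Q + Q` is the sum of
two lattice points of `Q`, then every lattice point of the Minkowski sum `P₁ + P₂` is the
sum of a lattice point of `P₁` and a lattice point of `P₂`. -/
theorem cayley_sum_reduction {n : ℕ} (S₁ S₂ : Finset (Fin n → ℤ))
    (P₁ P₂ : Set (Fin n → ℝ))
    (hP₁ : P₁ = convexHull ℝ ((fun f : Fin n → ℤ => fun i => (f i : ℝ)) '' (S₁ : Set (Fin n → ℤ))))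
    (hP₂ : P₂ = convexHull ℝ ((fun f : Fin n → ℤ => fun i => (f i : ℝ)) '' (S₂ : Set (Fin n → ℤ))))
    (Q : Set (Fin (n + 1) → ℝ))
    (hQ : Q = convexHull ℝ
      ((fun x : Fin n → ℝ => Fin.snoc x (0 : ℝ)) '' P₁ ∪
        (fun x : Fin n → ℝ => Fin.snoc x (1 : ℝ)) '' P₂))
    (hyp : ∀ z ∈ Q + Q, IsLatticePoint z →
      ∃ q₁ ∈ Q, ∃ q₂ ∈ Q, IsLatticePoint q₁ ∧ IsLatticePoint q₂ ∧ z = q₁ + q₂) :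
    ∀ w ∈ P₁ + P₂, IsLatticePoint w →
      ∃ p₁ ∈ P₁, ∃ p₂ ∈ P₂, IsLatticePoint p₁ ∧ IsLatticePoint p₂ ∧ w = p₁ + p₂ := by
  change Q = cayleySum ℝ P₁ P₂ at hQ
  subst hQ
  have hc₁ : Convex ℝ P₁ := hP₁ ▸ convex_convexHull ℝ _
  have hc₂ : Convex ℝ P₂ := hP₂ ▸ convex_convexHull ℝ _
  rintro w ⟨a, ha, b, hb, rfl⟩ hw
  have hz : Fin.snoc (a + b) (1 : ℝ) ∈ cayleySum ℝ P₁ P₂ + cayleySum ℝ P₁ P₂ := by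
    rw [← zero_add (1 : ℝ), ← Fin.snoc_add_snoc]
    exact Set.add_mem_add (snoc_zero_mem_cayleySum ha) (snoc_one_mem_cayleySum hb)
  obtain ⟨q₁, hq₁, q₂, hq₂, hl₁, hl₂, hsum⟩ := hyp _ hz (by exact_mod_cast hw.snoc 1)
  have hlast : q₁ (Fin.last n) + q₂ (Fin.last n) = 1 := by
    simpa using (congrFun hsum (Fin.last n)).symm
  wlog h₁ : q₁ (Fin.last n) = 0 generalizing q₁ q₂
  · have h₂ : q₂ (Fin.last n) = 0 := by
      rcases last_eq_zero_or_one_of_mem_cayleySum hq₁ hl₁ with h | h <;> [contradiction; linarith]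
    exact this q₂ hq₂ q₁ hq₁ hl₂ hl₁ (hsum.trans (add_comm q₁ q₂)) (by linarith) h₂
  have h₂ : q₂ (Fin.last n) = 1 := by linarith
  exact ⟨Fin.init q₁, init_mem_left_of_mem_cayleySum hc₁ hc₂ ⟨a, ha⟩ ⟨b, hb⟩ hq₁ h₁,
    Fin.init q₂, init_mem_right_of_mem_cayleySum hc₁ hc₂ ⟨a, ha⟩ ⟨b, hb⟩ hq₂ h₂,
    hl₁.init, hl₂.init, (Fin.init_snoc _ _).symm.trans (congrArg Fin.init hsum)⟩
end

section
/- Let P ⊆ ℝ⁴ be the convex hull of the five points (0,0,0,0), (1,0,0,0), (0,1,0,0), (0,0,1,0), (1,1,1,3). Then the point (1,1,1,1) lies in 3P = {3x : x ∈ P}, but there do not exist a ∈ P ∩ ℤ⁴ and b ∈ 2P ∩ ℤ⁴ with a + b = (1,1,1,1). -/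
open Pointwise

/-- The polytope of Example 4.8: the convex hull of
`(0,0,0,0), (1,0,0,0), (0,1,0,0), (0,0,1,0), (1,1,1,3)` in `ℝ⁴`. -/
noncomputable def Pex : Set (Fin 4 → ℝ) :=
  convexHull ℝ {![0,0,0,0], ![1,0,0,0], ![0,1,0,0], ![0,0,1,0], ![1,1,1,3]}

/-!
For `t ≥ 0`, `t • Pex` satisfies the facet inequalities `0 ≤ x₃`, `x₃ ≤ 3xᵢ` (`i < 3`) and
`3(x₀ + x₁ + x₂) ≤ 3t + 2x₃`, which make sense over `ℤ`. If `a + b = (1,1,1,1)` with `a ∈ P`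
and `b ∈ 2P` integral, then one of `a₃, b₃` is `1`; that point has all other coordinates `≥ 1`,
so its coordinate sum is `≥ 3`, and the last inequality fails because `3 · 3 > 3t + 2` for `t ≤ 2`.
-/

theorem third_mem_Pex : (![1/3, 1/3, 1/3, 1/3] : Fin 4 → ℝ) ∈ Pex := by
  let v : Fin 5 → Fin 4 → ℝ := ![![0,0,0,0], ![1,0,0,0], ![0,1,0,0], ![0,0,1,0], ![1,1,1,3]]
  let w : Fin 5 → ℝ := ![2/9, 2/9, 2/9, 2/9, 1/9]
  have hmem : ∑ i, w i • v i ∈ Pex :=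
    (convex_convexHull ℝ _).sum_mem (by simp [w, Fin.forall_fin_succ]; norm_num)
      (by simp [w, Fin.sum_univ_five]; norm_num)
      (fun i _ => subset_convexHull ℝ _ (by fin_cases i <;> simp [v]))
  convert hmem using 1
  ext j
  fin_cases j <;> simp [v, w, Fin.sum_univ_five] <;> norm_num

def PexFacets {R : Type*} [Semiring R] [LE R] (t : R) : Set (Fin 4 → R) :=
  {x | 0 ≤ x 3 ∧ x 3 ≤ 3 * x 0 ∧ x 3 ≤ 3 * x 1 ∧ x 3 ≤ 3 * x 2 ∧
    3 * (x 0 + x 1 + x 2) ≤ 3 * t + 2 * x 3}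

theorem convex_PexFacets (t : ℝ) : Convex ℝ (PexFacets t) := by
  rintro x ⟨hx₀, hx₁, hx₂, hx₃, hx₄⟩ y ⟨hy₀, hy₁, hy₂, hy₃, hy₄⟩ a b ha hb hab
  simp only [PexFacets, Set.mem_ofPred_eq, Pi.add_apply, Pi.smul_apply, smul_eq_mul]
  refine ⟨?_, ?_, ?_, ?_, ?_⟩ <;> nlinarith

theorem Pex_subset_PexFacets_one : Pex ⊆ PexFacets 1 := by
  refine convexHull_min ?_ (convex_PexFacets 1)
  simp [Set.insert_subset_iff, PexFacets]
  norm_num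

theorem smul_PexFacets_one_subset {t : ℝ} (ht : 0 ≤ t) : t • PexFacets 1 ⊆ PexFacets t := by
  rintro _ ⟨x, ⟨hx₀, hx₁, hx₂, hx₃, hx₄⟩, rfl⟩
  simp only [PexFacets, Set.mem_ofPred_eq, Pi.smul_apply, smul_eq_mul]
  refine ⟨?_, ?_, ?_, ?_, ?_⟩ <;> nlinarith

theorem smul_Pex_subset_PexFacets {t : ℝ} (ht : 0 ≤ t) : t • Pex ⊆ PexFacets t :=
  (Set.smul_set_mono Pex_subset_PexFacets_one).trans (smul_PexFacets_one_subset ht)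

theorem cast_mem_PexFacets_iff (a : Fin 4 → ℤ) (t : ℤ) :
    (fun i => (a i : ℝ)) ∈ PexFacets (t : ℝ) ↔ a ∈ PexFacets t := by
  simp only [PexFacets, Set.mem_ofPred_eq]
  norm_cast

theorem mem_PexFacets_of_cast_mem_smul_Pex {a : Fin 4 → ℤ} {t : ℕ}
    (h : (fun i => (a i : ℝ)) ∈ (t : ℝ) • Pex) : a ∈ PexFacets (t : ℤ) :=
  (cast_mem_PexFacets_iff a t).1 (by exact_mod_cast smul_Pex_subset_PexFacets t.cast_nonneg h)

theorem add_ne_of_mem_PexFacets {a b : Fin 4 → ℤ} (ha : a ∈ PexFacets 1) (hb : b ∈ PexFacets 2) :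
    a + b ≠ ![1,1,1,1] := by
  obtain ⟨ha₀, ha₁, ha₂, ha₃, ha₄⟩ := ha
  obtain ⟨hb₀, hb₁, hb₂, hb₃, hb₄⟩ := hb
  intro hab
  have h₀ := congrFun hab 0
  have h₁ := congrFun hab 1
  have h₂ := congrFun hab 2
  have h₃ := congrFun hab 3
  simp only [Pi.add_apply, Matrix.cons_val] at h₀ h₁ h₂ h₃
  obtain h | h : b 3 = 0 ∨ b 3 = 1 := by omega
  all_goals omega

/-- Example 4.8: `(1,1,1,1)` lies in `3P`, but cannot be written as the sum of a lattice
point of `P` and a lattice point of `2P`. -/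
theorem example_non_vanishing :
    (![1,1,1,1] : Fin 4 → ℝ) ∈ (3 : ℝ) • Pex ∧
    ¬ ∃ a b : Fin 4 → ℤ,
        (fun i => (a i : ℝ)) ∈ Pex ∧ (fun i => (b i : ℝ)) ∈ (2 : ℝ) • Pex ∧
        a + b = ![1,1,1,1] := by
  refine ⟨⟨_, third_mem_Pex, ?_⟩, ?_⟩
  · ext j
    fin_cases j <;> simp
  · rintro ⟨a, b, ha, hb, hab⟩
    refine add_ne_of_mem_PexFacets (mem_PexFacets_of_cast_mem_smul_Pex (t := 1) ?_)
      (mem_PexFacets_of_cast_mem_smul_Pex (t := 2) ?_) hab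
    · simpa using ha
    · simpa using hb
end
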